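/- arXiv:2106.05879 — 7 statements merged into one kernel-verified Lean document; each statement's English description precedes it below -/
import Mathlib

section
/- If G is a 5-regular finite simple graph on 2n vertices in which every edge lies in a triangle, then G contains at least 2n triangles. -/
/-!
Every edge `va` at a vertex `v` lies in a triangle through `v`, and each triangle through `v`
contains only two neighbours of `v`; so double counting neighbour–triangle incidences at `v`
shows that `v` lies in at least `⌈d / 2⌉` triangles of a `d`-regular graph, i.e. in at least
three when `d = 5`. Since every triangle has three vertices, summing over all vertices gives at
least `|V|` triangles.
-/

open Finset

namespace SimpleGraph

variable {V : Type*} [Fintype V] [DecidableEq V] {G : SimpleGraph V} [DecidableRel G.Adj]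

lemma card_filter_neighborFinset_mem_le_two {v : V} {t : Finset V}
    (ht : t ∈ G.cliqueFinset 3) (hv : v ∈ t) : #{a ∈ G.neighborFinset v | a ∈ t} ≤ 2 := by
  have hsub : {a ∈ G.neighborFinset v | a ∈ t} ⊆ t.erase v := fun a ha => by
    rw [mem_filter, mem_neighborFinset] at ha
    exact mem_erase.2 ⟨ha.1.ne', ha.2⟩
  calc #{a ∈ G.neighborFinset v | a ∈ t} ≤ #(t.erase v) := card_le_card hsub
    _ = 2 := by rw [card_erase_of_mem hv, (mem_cliqueFinset_iff.1 ht).card_eq]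

lemma degree_le_two_mul_card_filter_mem_cliqueFinset_three
    (htri : ∀ u v : V, G.Adj u v → ∃ w : V, G.Adj u w ∧ G.Adj v w) (v : V) :
    G.degree v ≤ 2 * #{t ∈ G.cliqueFinset 3 | v ∈ t} := by
  have hone : ∀ a ∈ G.neighborFinset v,
      1 ≤ #(bipartiteAbove (· ∈ ·) {t ∈ G.cliqueFinset 3 | v ∈ t} a) := by
    intro a ha
    rw [mem_neighborFinset] at ha
    obtain ⟨w, hvw, haw⟩ := htri v a ha
    refine card_pos.2 ⟨{v, a, w}, ?_⟩
    simp [mem_cliqueFinset_iff, is3Clique_triple_iff, ha, hvw, haw]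
  have htwo : ∀ t ∈ {t ∈ G.cliqueFinset 3 | v ∈ t},
      #(bipartiteBelow (· ∈ ·) (G.neighborFinset v) t) ≤ 2 := by
    intro t ht
    rw [mem_filter] at ht
    exact card_filter_neighborFinset_mem_le_two ht.1 ht.2
  have := card_mul_le_card_mul (· ∈ ·) hone htwo
  rw [card_neighborFinset_eq_degree, mul_one] at this
  omega

lemma sum_card_cliqueFinset (k : ℕ) : ∑ t ∈ G.cliqueFinset k, #t = #(G.cliqueFinset k) * k := by
  rw [sum_congr rfl fun t ht => (mem_cliqueFinset_iff.1 ht).card_eq, sum_const, smul_eq_mul]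

theorem IsRegularOfDegree.card_mul_le_three_mul_card_cliqueFinset_three {d : ℕ}
    (hreg : G.IsRegularOfDegree d)
    (htri : ∀ u v : V, G.Adj u v → ∃ w : V, G.Adj u w ∧ G.Adj v w) :
    Fintype.card V * ((d + 1) / 2) ≤ 3 * #(G.cliqueFinset 3) := by
  have hvertex : ∀ v, (d + 1) / 2 ≤ #{t ∈ G.cliqueFinset 3 | v ∈ t} := fun v => by
    have := degree_le_two_mul_card_filter_mem_cliqueFinset_three htri v
    rw [hreg v] at this
    omega
  calc Fintype.card V * ((d + 1) / 2) ≤ ∑ t ∈ G.cliqueFinset 3, #t := le_sum_card hvertex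
    _ = 3 * #(G.cliqueFinset 3) := by rw [sum_card_cliqueFinset, mul_comm]

end SimpleGraph

/-- A 5-regular graph on `2n` vertices with every edge in a triangle has at
least `2n` triangles. -/
theorem stmt_7 {V : Type*} [Fintype V] [DecidableEq V] (G : SimpleGraph V)
    [DecidableRel G.Adj] (n : ℕ) (hcard : Fintype.card V = 2 * n)
    (hreg : G.IsRegularOfDegree 5)
    (htri : ∀ u v : V, G.Adj u v → ∃ w : V, G.Adj u w ∧ G.Adj v w) :
    2 * n ≤ (G.cliqueFinset 3).card := by
  have := hreg.card_mul_le_three_mul_card_cliqueFinset_three htri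
  rw [hcard] at this
  omega
end

section
/- If G is a 5-regular finite simple graph in which every edge lies in a triangle, then every vertex of G is incident to at least one edge that lies in at least two triangles. -/
/-!
If every edge at `v` lay in exactly one triangle, then in the link of `v` (the subgraph induced on
its neighbourhood) every vertex would have degree exactly one. A `1`-regular graph has an even
number of vertices by the handshake lemma, but the link of `v` has `deg v = 5` vertices.
-/

open Finset

namespace SimpleGraph

variable {V : Type*} [Fintype V] {G : SimpleGraph V} [DecidableRel G.Adj]

theorem IsRegularOfDegree.even_card_of_odd {d : ℕ} (hG : G.IsRegularOfDegree d) (hd : Odd d) :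
    Even (Fintype.card V) := by
  classical
  have hsum := G.sum_degrees_eq_twice_card_edges
  simp only [hG.degree_eq, sum_const, card_univ, smul_eq_mul] at hsum
  exact (Nat.even_mul.mp ⟨_, hsum.trans (two_mul _)⟩).resolve_right (Nat.not_even_iff_odd.mpr hd)

theorem degree_induce_neighborSet [DecidableEq V] {u v : V} (hu : G.Adj v u) :
    (G.induce (G.neighborSet v)).degree ⟨u, hu⟩ = #(G.neighborFinset v ∩ G.neighborFinset u) := by
  rw [← card_neighborFinset_eq_degree, ← card_map (Function.Embedding.subtype _)]
  congr 1
  ext w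
  simp [and_comm]

end SimpleGraph

/-- In a 5-regular graph with every edge in a triangle, every vertex is incident
to an edge lying in at least two triangles (i.e. whose endpoints have at least
two common neighbours). -/
theorem stmt_8 {V : Type*} [Fintype V] [DecidableEq V] (G : SimpleGraph V)
    [DecidableRel G.Adj]
    (hreg : G.IsRegularOfDegree 5)
    (htri : ∀ u v : V, G.Adj u v → ∃ w : V, G.Adj u w ∧ G.Adj v w) :
    ∀ v : V, ∃ u : V, G.Adj v u ∧
      2 ≤ (G.neighborFinset v ∩ G.neighborFinset u).card := by
  intro v
  by_contra! hsingle
  have hlink : (G.induce (G.neighborSet v)).IsRegularOfDegree 1 := by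
    rintro ⟨u, hu⟩
    obtain ⟨w, hvw, huw⟩ := htri v u hu
    have hpos : 0 < #(G.neighborFinset v ∩ G.neighborFinset u) :=
      card_pos.mpr ⟨w, by simp [hvw, huw]⟩
    have hlt := hsingle u hu
    rw [SimpleGraph.degree_induce_neighborSet hu]
    omega
  have heven := hlink.even_card_of_odd odd_one
  rw [G.card_neighborSet_eq_degree, hreg.degree_eq] at heven
  exact Nat.not_even_iff_odd.mpr (by decide) heven
end

section
/- Let r be an integer with r > 2. If G is a (2r+1)-regular finite simple graph in which every edge lies in a triangle, then every vertex of G is contained in at least r+1 triangles, and consequently if G has n vertices it contains at least (r+1)n/3 triangles. -/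
open Finset

/-- In a `(2r+1)`-regular graph (`r > 2`) with every edge in a triangle, every
vertex lies in at least `r+1` triangles, and hence a graph on `n` vertices has
at least `(r+1)*n/3` triangles. -/
theorem stmt_10 {V : Type*} [Fintype V] [DecidableEq V] (G : SimpleGraph V)
    [DecidableRel G.Adj] (r : ℕ) (hr : 2 < r)
    (hreg : G.IsRegularOfDegree (2 * r + 1))
    (htri : ∀ u v : V, G.Adj u v → ∃ w : V, G.Adj u w ∧ G.Adj v w) :
    (∀ v : V, r + 1 ≤ ((G.cliqueFinset 3).filter (fun t => v ∈ t)).card) ∧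
      ((r + 1 : ℚ) * (Fintype.card V : ℚ)) / 3 ≤ ((G.cliqueFinset 3).card : ℚ) := by
  have key : ∀ v : V, r + 1 ≤ ((G.cliqueFinset 3).filter (fun t => v ∈ t)).card := by
    intro v
    set T := (G.cliqueFinset 3).filter (fun t => v ∈ t) with hT
    set S := G.neighborFinset v with hS
    set P := (S ×ˢ S).filter (fun p => G.Adj p.1 p.2) with hP
    have hSP : S.card ≤ P.card := by
      have hsub : S ⊆ P.image Prod.fst := by
        intro a ha
        have ha' : G.Adj v a := by rwa [hS, SimpleGraph.mem_neighborFinset] at ha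
        obtain ⟨w, hvw, haw⟩ := htri v a ha'
        refine mem_image.2 ⟨(a, w), ?_, rfl⟩
        simp only [hP, mem_filter, mem_product, hS, SimpleGraph.mem_neighborFinset]
        exact ⟨⟨ha', hvw⟩, haw⟩
      exact (card_le_card hsub).trans card_image_le
    have hPT : P.card ≤ 2 * T.card := by
      apply card_le_mul_card_image_of_maps_to
        (f := fun p : V × V => ({v, p.1, p.2} : Finset V))
      · intro p hp
        simp only [hP, mem_filter, mem_product, hS, SimpleGraph.mem_neighborFinset] at hp
        obtain ⟨⟨ha, hb⟩, hab⟩ := hp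
        rw [hT, mem_filter, SimpleGraph.mem_cliqueFinset_iff]
        refine ⟨?_, by simp⟩
        rw [SimpleGraph.is3Clique_triple_iff]
        exact ⟨ha, hb, hab⟩
      · intro t ht
        rw [hT, mem_filter, SimpleGraph.mem_cliqueFinset_iff] at ht
        obtain ⟨hclique, hv⟩ := ht
        have hcard : t.card = 3 := hclique.card_eq
        have h2 : (t.erase v).card = 2 := by rw [card_erase_of_mem hv, hcard]
        obtain ⟨x, y, hxy, hexy⟩ := card_eq_two.1 h2
        have hsub : P.filter (fun p => ({v, p.1, p.2} : Finset V) = t)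
            ⊆ ({(x, y), (y, x)} : Finset (V × V)) := by
          intro p hp
          obtain ⟨hpP, hpt⟩ := mem_filter.1 hp
          simp only [hP, mem_filter, mem_product, hS, SimpleGraph.mem_neighborFinset] at hpP
          obtain ⟨⟨ha, hb⟩, hab⟩ := hpP
          have ha1 : p.1 ∈ t.erase v := by
            rw [← hpt] at *
            exact mem_erase.2 ⟨ha.ne.symm, by simp⟩
          have hb1 : p.2 ∈ t.erase v := by
            rw [← hpt] at *
            exact mem_erase.2 ⟨hb.ne.symm, by simp⟩
          rw [hexy, mem_insert, mem_singleton] at ha1 hb1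
          have hne : p.1 ≠ p.2 := hab.ne
          rcases ha1 with h1 | h1 <;> rcases hb1 with h2 | h2
          · exact absurd (h1.trans h2.symm) hne
          · simp only [mem_insert, mem_singleton]
            left; exact Prod.ext h1 h2
          · simp only [mem_insert, mem_singleton]
            right; exact Prod.ext h1 h2
          · exact absurd (h1.trans h2.symm) hne
        calc (P.filter (fun p => ({v, p.1, p.2} : Finset V) = t)).card
            ≤ ({(x, y), (y, x)} : Finset (V × V)).card := card_le_card hsub
          _ ≤ 2 := card_insert_le _ _ |>.trans (by simp)
    have hScard : S.card = 2 * r + 1 := by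
      rw [hS, SimpleGraph.card_neighborFinset_eq_degree]; exact hreg v
    omega
  refine ⟨key, ?_⟩
  have hsum : ∑ v : V, ((G.cliqueFinset 3).filter (fun t => v ∈ t)).card
      = 3 * (G.cliqueFinset 3).card := by
    have : ∀ v : V, ((G.cliqueFinset 3).filter (fun t => v ∈ t)).card
        = ∑ t ∈ G.cliqueFinset 3, if v ∈ t then 1 else 0 := by
      intro v; rw [card_filter]
    rw [Finset.sum_congr rfl fun v _ => this v, Finset.sum_comm]
    have h3 : ∀ t ∈ G.cliqueFinset 3, (∑ v : V, if v ∈ t then 1 else 0) = 3 := by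
      intro t ht
      have : (∑ v : V, if v ∈ t then 1 else 0) = t.card := by
        rw [← card_filter]
        congr 1
        ext a; simp
      rw [this, (SimpleGraph.mem_cliqueFinset_iff.1 ht).card_eq]
    rw [Finset.sum_congr rfl h3, Finset.sum_const, smul_eq_mul, mul_comm]
  have hmain : (r + 1) * Fintype.card V ≤ 3 * (G.cliqueFinset 3).card := by
    calc (r + 1) * Fintype.card V = ∑ _v : V, (r + 1) := by
          rw [Finset.sum_const, smul_eq_mul, mul_comm]; rfl
      _ ≤ ∑ v : V, ((G.cliqueFinset 3).filter (fun t => v ∈ t)).card :=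
          Finset.sum_le_sum fun v _ => key v
      _ = 3 * (G.cliqueFinset 3).card := hsum
  rw [div_le_iff₀ (by norm_num : (0:ℚ) < 3)]
  calc ((r : ℚ) + 1) * (Fintype.card V : ℚ) = (((r + 1) * Fintype.card V : ℕ) : ℚ) := by
        push_cast; ring
    _ ≤ ((3 * (G.cliqueFinset 3).card : ℕ) : ℚ) := by exact_mod_cast hmain
    _ = ((G.cliqueFinset 3).card : ℚ) * 3 := by push_cast; ring
end

section
/- For each integer n ≥ 7, every edge of the graph L_n lies in at least one triangle. -/
/-- The adjacency rules of the graph `Lₙ` on labels `{0,…,2n−1}`: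
for `0 ≤ k < n`, `k ~ (k+1) % n`, `k ~ n+k`, `(n+k) ~ n+((k+2) % n)`,
`(n+k) ~ (k−2) % n`, and `(n+k) ~ (k+1) % n`. -/
def Lrel (n i j : ℕ) : Prop :=
  (i < n ∧ j < n ∧ j = (i + 1) % n) ∨
  (i < n ∧ j = n + i) ∨
  (n ≤ i ∧ i < 2 * n ∧ j = n + ((i + 2) % n)) ∨
  (n ≤ i ∧ i < 2 * n ∧ j = (i + n - 2) % n) ∨
  (n ≤ i ∧ i < 2 * n ∧ j = (i + 1) % n)

instance (n i j : ℕ) : Decidable (Lrel n i j) := by unfold Lrel; infer_instance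

/-- The graph `Lₙ` on vertex set `{0,…,2n−1}`. -/
def Lgraph (n : ℕ) : SimpleGraph (Fin (2 * n)) :=
  SimpleGraph.fromRel (fun a b => Lrel n a.1 b.1)

instance (n : ℕ) : DecidableRel (Lgraph n).Adj := fun a b =>
  inferInstanceAs (Decidable (a ≠ b ∧ (Lrel n a.1 b.1 ∨ Lrel n b.1 a.1)))

set_option linter.unreachableTactic false
set_option linter.unusedTactic false

lemma mf (n a : ℕ) (h : a < 3 * n) :
    (a < n ∧ a % n = a) ∨ (n ≤ a ∧ a < 2 * n ∧ a % n = a - n) ∨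
    (2 * n ≤ a ∧ a % n = a - 2 * n) := by
  rcases Nat.lt_or_ge a n with h1 | h1
  · exact Or.inl ⟨h1, Nat.mod_eq_of_lt h1⟩
  rcases Nat.lt_or_ge a (2 * n) with h2 | h2
  · refine Or.inr (Or.inl ⟨h1, h2, ?_⟩)
    rw [Nat.mod_eq_sub_mod h1, Nat.mod_eq_of_lt (by first | omega | trivial)]
  · refine Or.inr (Or.inr ⟨h2, ?_⟩)
    rw [Nat.mod_eq_sub_mod h1, Nat.mod_eq_sub_mod (by first | omega | trivial), Nat.mod_eq_of_lt (by first | omega | trivial)]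
    omega

lemma modred (n a b : ℕ) (hb : b < n) (h : a = n + b ∨ a = n + (n + b) ∨ a = b) :
    a % n = b := by
  rcases h with rfl | rfl | rfl
  · rw [Nat.add_mod_left]; exact Nat.mod_eq_of_lt hb
  · rw [Nat.add_mod_left, Nat.add_mod_left]; exact Nat.mod_eq_of_lt hb
  · exact Nat.mod_eq_of_lt hb

lemma key (n : ℕ) (hn : 7 ≤ n) (i j : Fin (2 * n)) (hne : i ≠ j)
    (h : Lrel n i.1 j.1) :
    ∃ w : Fin (2 * n), (Lgraph n).Adj i w ∧ (Lgraph n).Adj j w := by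
  obtain ⟨I, hI⟩ := i
  obtain ⟨J, hJ⟩ := j
  simp only [ne_eq, Fin.mk.injEq] at hne
  simp only [Fin.val_mk] at h
  rcases h with ⟨h1, h2, h3⟩ | ⟨h1, h2⟩ | ⟨h1, h2, h3⟩ | ⟨h1, h2, h3⟩ | ⟨h1, h2, h3⟩
  · -- j = (i+1)%n : take w = n + i
    rcases mf n (I + 1) (by first | omega | trivial) with ⟨hb, e⟩ | ⟨hb1, hb2, e⟩ | ⟨hb, e⟩
    · rw [e] at h3
      refine ⟨⟨n + I, by first | omega | trivial⟩, ?_, ?_⟩ <;>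
        simp only [Lgraph, SimpleGraph.fromRel_adj, Lrel, ne_eq, Fin.mk.injEq, Fin.val_mk]
      · exact ⟨by first | omega | trivial, Or.inl (Or.inr (Or.inl ⟨by first | omega | trivial, by first | omega | trivial⟩))⟩
      · exact ⟨by first | omega | trivial, Or.inr (Or.inr (Or.inr (Or.inr (Or.inr
          ⟨by first | omega | trivial, by first | omega | trivial, (modred n (n + I + 1) J (by first | omega | trivial) (by first | omega | trivial)).symm⟩))))⟩
    · rw [e] at h3
      refine ⟨⟨n + I, by first | omega | trivial⟩, ?_, ?_⟩ <;>
        simp only [Lgraph, SimpleGraph.fromRel_adj, Lrel, ne_eq, Fin.mk.injEq, Fin.val_mk]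
      · exact ⟨by first | omega | trivial, Or.inl (Or.inr (Or.inl ⟨by first | omega | trivial, by first | omega | trivial⟩))⟩
      · exact ⟨by first | omega | trivial, Or.inr (Or.inr (Or.inr (Or.inr (Or.inr
          ⟨by first | omega | trivial, by first | omega | trivial, (modred n (n + I + 1) J (by first | omega | trivial) (by first | omega | trivial)).symm⟩))))⟩
    · exact absurd hb (by first | omega | trivial)
  · -- j = n + i : take w = (i+1)%n
    rcases mf n (I + 1) (by first | omega | trivial) with ⟨hb, e⟩ | ⟨hb1, hb2, e⟩ | ⟨hb, e⟩
    · refine ⟨⟨(I + 1) % n, by first | omega | trivial⟩, ?_, ?_⟩ <;>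
        simp only [Lgraph, SimpleGraph.fromRel_adj, Lrel, ne_eq, Fin.mk.injEq, Fin.val_mk, e]
      · exact ⟨by first | omega | trivial, Or.inl (Or.inl ⟨by first | omega | trivial, by first | omega | trivial, by first | omega | trivial⟩)⟩
      · exact ⟨by first | omega | trivial, Or.inl (Or.inr (Or.inr (Or.inr (Or.inr
          ⟨by first | omega | trivial, by first | omega | trivial, (modred n (J + 1) (I + 1) (by first | omega | trivial) (by first | omega | trivial)).symm⟩))))⟩
    · refine ⟨⟨(I + 1) % n, by first | omega | trivial⟩, ?_, ?_⟩ <;>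
        simp only [Lgraph, SimpleGraph.fromRel_adj, Lrel, ne_eq, Fin.mk.injEq, Fin.val_mk, e]
      · exact ⟨by first | omega | trivial, Or.inl (Or.inl ⟨by first | omega | trivial, by first | omega | trivial, by first | omega | trivial⟩)⟩
      · exact ⟨by first | omega | trivial, Or.inl (Or.inr (Or.inr (Or.inr (Or.inr
          ⟨by first | omega | trivial, by first | omega | trivial, (modred n (J + 1) (I + 1 - n) (by first | omega | trivial) (by first | omega | trivial)).symm⟩))))⟩
    · exact absurd hb (by first | omega | trivial)
  · -- j = n + (i+2)%n : take w = i - n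
    rcases mf n (I + 2) (by first | omega | trivial) with ⟨hb, e⟩ | ⟨hb1, hb2, e⟩ | ⟨hb, e⟩
    · exact absurd hb (by first | omega | trivial)
    · rw [e] at h3
      refine ⟨⟨I - n, by first | omega | trivial⟩, ?_, ?_⟩ <;>
        simp only [Lgraph, SimpleGraph.fromRel_adj, Lrel, ne_eq, Fin.mk.injEq, Fin.val_mk]
      · exact ⟨by first | omega | trivial, Or.inr (Or.inr (Or.inl ⟨by first | omega | trivial, by first | omega | trivial⟩))⟩
      · exact ⟨by first | omega | trivial, Or.inl (Or.inr (Or.inr (Or.inr (Or.inl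
          ⟨by first | omega | trivial, by first | omega | trivial, (modred n (J + n - 2) (I - n) (by first | omega | trivial) (by first | omega | trivial)).symm⟩))))⟩
    · rw [e] at h3
      refine ⟨⟨I - n, by first | omega | trivial⟩, ?_, ?_⟩ <;>
        simp only [Lgraph, SimpleGraph.fromRel_adj, Lrel, ne_eq, Fin.mk.injEq, Fin.val_mk]
      · exact ⟨by first | omega | trivial, Or.inr (Or.inr (Or.inl ⟨by first | omega | trivial, by first | omega | trivial⟩))⟩
      · exact ⟨by first | omega | trivial, Or.inl (Or.inr (Or.inr (Or.inr (Or.inl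
          ⟨by first | omega | trivial, by first | omega | trivial, (modred n (J + n - 2) (I - n) (by first | omega | trivial) (by first | omega | trivial)).symm⟩))))⟩
  · -- j = (i+n-2)%n : take w = n + j
    rcases mf n (I + n - 2) (by first | omega | trivial) with ⟨hb, e⟩ | ⟨hb1, hb2, e⟩ | ⟨hb, e⟩
    · exact absurd hb (by first | omega | trivial)
    · rw [e] at h3
      refine ⟨⟨n + J, by first | omega | trivial⟩, ?_, ?_⟩ <;>
        simp only [Lgraph, SimpleGraph.fromRel_adj, Lrel, ne_eq, Fin.mk.injEq, Fin.val_mk]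
      · refine ⟨by first | omega | trivial, Or.inr (Or.inr (Or.inr (Or.inl ⟨by first | omega | trivial, by first | omega | trivial, ?_⟩)))⟩
        rw [modred n (n + J + 2) (I - n) (by first | omega | trivial) (by first | omega | trivial)]; omega
      · exact ⟨by first | omega | trivial, Or.inl (Or.inr (Or.inl ⟨by first | omega | trivial, by first | omega | trivial⟩))⟩
    · rw [e] at h3
      refine ⟨⟨n + J, by first | omega | trivial⟩, ?_, ?_⟩ <;>
        simp only [Lgraph, SimpleGraph.fromRel_adj, Lrel, ne_eq, Fin.mk.injEq, Fin.val_mk]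
      · refine ⟨by first | omega | trivial, Or.inr (Or.inr (Or.inr (Or.inl ⟨by first | omega | trivial, by first | omega | trivial, ?_⟩)))⟩
        rw [modred n (n + J + 2) (I - n) (by first | omega | trivial) (by first | omega | trivial)]; omega
      · exact ⟨by first | omega | trivial, Or.inl (Or.inr (Or.inl ⟨by first | omega | trivial, by first | omega | trivial⟩))⟩
  · -- j = (i+1)%n : take w = i - n
    rcases mf n (I + 1) (by first | omega | trivial) with ⟨hb, e⟩ | ⟨hb1, hb2, e⟩ | ⟨hb, e⟩
    · exact absurd hb (by first | omega | trivial)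
    · rw [e] at h3
      refine ⟨⟨I - n, by first | omega | trivial⟩, ?_, ?_⟩ <;>
        simp only [Lgraph, SimpleGraph.fromRel_adj, Lrel, ne_eq, Fin.mk.injEq, Fin.val_mk]
      · exact ⟨by first | omega | trivial, Or.inr (Or.inr (Or.inl ⟨by first | omega | trivial, by first | omega | trivial⟩))⟩
      · exact ⟨by first | omega | trivial, Or.inr (Or.inl
          ⟨by first | omega | trivial, by first | omega | trivial, (modred n (I - n + 1) J (by first | omega | trivial) (by first | omega | trivial)).symm⟩)⟩
    · rw [e] at h3
      refine ⟨⟨I - n, by first | omega | trivial⟩, ?_, ?_⟩ <;>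
        simp only [Lgraph, SimpleGraph.fromRel_adj, Lrel, ne_eq, Fin.mk.injEq, Fin.val_mk]
      · exact ⟨by first | omega | trivial, Or.inr (Or.inr (Or.inl ⟨by first | omega | trivial, by first | omega | trivial⟩))⟩
      · exact ⟨by first | omega | trivial, Or.inr (Or.inl
          ⟨by first | omega | trivial, by first | omega | trivial, (modred n (I - n + 1) J (by first | omega | trivial) (by first | omega | trivial)).symm⟩)⟩

/-- For `n ≥ 7`, every edge of `Lₙ` lies in a triangle. -/
theorem stmt_13 (n : ℕ) (hn : 7 ≤ n) :
    ∀ u v : Fin (2 * n), (Lgraph n).Adj u v →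
      ∃ w : Fin (2 * n), (Lgraph n).Adj u w ∧ (Lgraph n).Adj v w := by
  intro u v h
  simp only [Lgraph, SimpleGraph.fromRel_adj] at h
  obtain ⟨hne, h | h⟩ := h
  · exact key n hn u v hne h
  · obtain ⟨w, h1, h2⟩ := key n hn v u hne.symm h
    exact ⟨w, h2, h1⟩
end

section
/- For each integer n ≥ 7, the graph L_n contains exactly 2n triangles. -/
/- ### Auxiliary machinery -/

lemma mod3 (n x : ℕ) (hn : 0 < n) (hx : x < 3*n) :
    (x % n = x ∧ x < n) ∨ (x % n = x - n ∧ n ≤ x ∧ x < 2*n) ∨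
    (x % n = x - 2*n ∧ 2*n ≤ x) := by
  rcases lt_or_ge x n with h | h
  · exact Or.inl ⟨Nat.mod_eq_of_lt h, h⟩
  rcases lt_or_ge x (2*n) with h2 | h2
  · refine Or.inr (Or.inl ⟨?_, h, h2⟩)
    rw [Nat.mod_eq_sub_mod h, Nat.mod_eq_of_lt (by omega)]
  · refine Or.inr (Or.inr ⟨?_, h2⟩)
    rw [Nat.mod_eq_sub_mod h, Nat.mod_eq_sub_mod (by omega), Nat.mod_eq_of_lt (by omega)]
    omega

/-- A mod-free description of the edges of `Lₙ` (for `i < j`). -/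
def E (n i j : ℕ) : Prop :=
  (j < n ∧ j = i+1) ∨ (i = 0 ∧ j = n-1) ∨
  (i < n ∧ j = n+i) ∨
  (i + 3 ≤ n ∧ j = n+i+2) ∨ (i = n-2 ∧ j = n) ∨ (i = n-1 ∧ j = n+1) ∨
  (1 ≤ i ∧ i < n ∧ j + 1 = n + i) ∨ (i = 0 ∧ j = 2*n-1) ∨
  (n ≤ i ∧ j = i+2 ∧ j < 2*n) ∨ (i = n ∧ j = 2*n-2) ∨ (i = n+1 ∧ j = 2*n-1)

lemma adj_iff (n i j : ℕ) (hn : 7 ≤ n) (hi : i < 2*n) (hj : j < 2*n) (hij : i < j) :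
    (Lrel n i j ∨ Lrel n j i) ↔ E n i j := by
  unfold Lrel E
  constructor
  · rintro (⟨h|h|h|h|h⟩|⟨h|h|h|h|h⟩)
    · have m := mod3 n (i+1) (by omega) (by omega)
      exact Or.inl ⟨by omega, by omega⟩
    · exact Or.inr <| Or.inr <| Or.inl ⟨by omega, by omega⟩
    · have m := mod3 n (i+2) (by omega) (by omega)
      exact Or.inr <| Or.inr <| Or.inr <| Or.inr <| Or.inr <| Or.inr <| Or.inr <| Or.inr <|
        Or.inl ⟨by omega, by omega, by omega⟩
    · exfalso; have m := mod3 n (i+n-2) (by omega) (by omega); omega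
    · exfalso; have m := mod3 n (i+1) (by omega) (by omega); omega
    · have m := mod3 n (j+1) (by omega) (by omega)
      exact Or.inr <| Or.inl ⟨by omega, by omega⟩
    · exfalso; omega
    · have m := mod3 n (j+2) (by omega) (by omega)
      have key : (i = n ∧ j = 2*n-2) ∨ (i = n+1 ∧ j = 2*n-1) := by omega
      rcases key with k | k
      · exact Or.inr <| Or.inr <| Or.inr <| Or.inr <| Or.inr <| Or.inr <| Or.inr <| Or.inr <|
          Or.inr <| Or.inl ⟨k.1, k.2⟩
      · exact Or.inr <| Or.inr <| Or.inr <| Or.inr <| Or.inr <| Or.inr <| Or.inr <| Or.inr <|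
          Or.inr <| Or.inr ⟨k.1, k.2⟩
    · have m := mod3 n (j+n-2) (by omega) (by omega)
      have key : (i+3 ≤ n ∧ j = n+i+2) ∨ (i = n-2 ∧ j = n) ∨ (i = n-1 ∧ j = n+1) := by omega
      rcases key with k | k | k
      · exact Or.inr <| Or.inr <| Or.inr <| Or.inl k
      · exact Or.inr <| Or.inr <| Or.inr <| Or.inr <| Or.inl k
      · exact Or.inr <| Or.inr <| Or.inr <| Or.inr <| Or.inr <| Or.inl k
    · have m := mod3 n (j+1) (by omega) (by omega)
      have key : (1 ≤ i ∧ i < n ∧ j + 1 = n + i) ∨ (i = 0 ∧ j = 2*n-1) := by omega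
      rcases key with k | k
      · exact Or.inr <| Or.inr <| Or.inr <| Or.inr <| Or.inr <| Or.inr <| Or.inl k
      · exact Or.inr <| Or.inr <| Or.inr <| Or.inr <| Or.inr <| Or.inr <| Or.inr <| Or.inl k
  · rintro (h|h|h|h|h|h|h|h|h|h|h)
    · refine Or.inl (Or.inl ⟨by omega, by omega, ?_⟩)
      have := mod3 n (i+1) (by omega) (by omega); omega
    · refine Or.inr (Or.inl ⟨by omega, by omega, ?_⟩)
      have := mod3 n (j+1) (by omega) (by omega); omega
    · exact Or.inl (Or.inr (Or.inl ⟨by omega, by omega⟩))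
    · refine Or.inr (Or.inr <| Or.inr <| Or.inr <| Or.inl ⟨by omega, by omega, ?_⟩)
      have := mod3 n (j+n-2) (by omega) (by omega); omega
    · refine Or.inr (Or.inr <| Or.inr <| Or.inr <| Or.inl ⟨by omega, by omega, ?_⟩)
      have := mod3 n (j+n-2) (by omega) (by omega); omega
    · refine Or.inr (Or.inr <| Or.inr <| Or.inr <| Or.inl ⟨by omega, by omega, ?_⟩)
      have := mod3 n (j+n-2) (by omega) (by omega); omega
    · refine Or.inr (Or.inr <| Or.inr <| Or.inr <| Or.inr ⟨by omega, by omega, ?_⟩)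
      have := mod3 n (j+1) (by omega) (by omega); omega
    · refine Or.inr (Or.inr <| Or.inr <| Or.inr <| Or.inr ⟨by omega, by omega, ?_⟩)
      have := mod3 n (j+1) (by omega) (by omega); omega
    · refine Or.inl (Or.inr <| Or.inr <| Or.inl ⟨by omega, by omega, ?_⟩)
      have := mod3 n (i+2) (by omega) (by omega); omega
    · refine Or.inr (Or.inr <| Or.inr <| Or.inl ⟨by omega, by omega, ?_⟩)
      have := mod3 n (j+2) (by omega) (by omega); omega
    · refine Or.inr (Or.inr <| Or.inr <| Or.inl ⟨by omega, by omega, ?_⟩)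
      have := mod3 n (j+2) (by omega) (by omega); omega

lemma edge_ii {n a b : ℕ} (h : E n a b) (hn : 7 ≤ n) (hb : b < n) (hab : a < b) :
    b = a+1 ∨ (a = 0 ∧ b = n-1) := by unfold E at h; omega

lemma edge_io {n a b : ℕ} (h : E n a b) (hn : 7 ≤ n) (ha : a < n) (hb : n ≤ b) :
    b = n+a ∨ b = n+a+2 ∨ b+1 = n+a ∨ (a=0 ∧ b=2*n-1) ∨ (a=n-2 ∧ b=n) ∨ (a=n-1 ∧ b=n+1) := by
  unfold E at h; omega

lemma edge_oo {n a b : ℕ} (h : E n a b) (hn : 7 ≤ n) (ha : n ≤ a) (hab : a < b) :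
    b = a+2 ∨ (a=n ∧ b=2*n-2) ∨ (a=n+1 ∧ b=2*n-1) := by unfold E at h; omega

lemma classify (n a b c : ℕ) (hn : 7 ≤ n) (hab : a < b) (hbc : b < c) (hc : c < 2*n)
    (e1 : E n a b) (e2 : E n a c) (e3 : E n b c) :
    (a + 1 < n ∧ b = a + 1 ∧ c = n + a) ∨
    (a = 0 ∧ b = n - 1 ∧ c = 2*n - 1) ∨
    (a + 3 ≤ n ∧ b = n + a ∧ c = n + a + 2) ∨
    (a = n - 2 ∧ b = n ∧ c = 2*n - 2) ∨
    (a = n - 1 ∧ b = n + 1 ∧ c = 2*n - 1) := by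
  rcases lt_or_ge c n with hcn | hcn
  · have f1 := edge_ii e1 hn (by omega) hab
    have f2 := edge_ii e2 hn (by omega) (by omega)
    have f3 := edge_ii e3 hn (by omega) hbc
    exfalso; omega
  rcases lt_or_ge b n with hbn | hbn
  · have f2 := edge_io e2 hn (by omega) (by omega)
    have f3 := edge_io e3 hn (by omega) (by omega)
    rcases edge_ii e1 hn hbn hab with f1 | f1
    · exact Or.inl ⟨by omega, by omega, by omega⟩
    · exact Or.inr (Or.inl ⟨by omega, by omega, by omega⟩)
  rcases lt_or_ge a n with han | han
  · have f1 := edge_io e1 hn han hbn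
    have f2 := edge_io e2 hn han (by omega)
    rcases edge_oo e3 hn hbn hbc with f3 | f3 | f3
    · exact Or.inr (Or.inr (Or.inl ⟨by omega, by omega, by omega⟩))
    · exact Or.inr (Or.inr (Or.inr (Or.inl ⟨by omega, by omega, by omega⟩)))
    · exact Or.inr (Or.inr (Or.inr (Or.inr ⟨by omega, by omega, by omega⟩)))
  · have f1 := edge_oo e1 hn han hab
    have f2 := edge_oo e2 hn han (by omega)
    have f3 := edge_oo e3 hn hbn hbc
    exfalso; omega

/-- The triangles of the first family. -/
def T1 (n : ℕ) (k : Fin n) : Finset (Fin (2*n)) :=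
  { ⟨k.1, by have := k.2; omega⟩,
    ⟨(k.1+1) % n, by have := k.2; have := Nat.mod_lt (k.1+1) (show 0 < n by omega); omega⟩,
    ⟨n + k.1, by have := k.2; omega⟩ }

/-- The triangles of the second family. -/
def T2 (n : ℕ) (k : Fin n) : Finset (Fin (2*n)) :=
  { ⟨k.1, by have := k.2; omega⟩,
    ⟨n + k.1, by have := k.2; omega⟩,
    ⟨n + (k.1+2) % n, by have := k.2; have := Nat.mod_lt (k.1+2) (show 0 < n by omega); omega⟩ }

lemma tri_mem (n : ℕ) (hn : 7 ≤ n) (a b c : Fin (2*n)) (h1 : a.1 < b.1) (h2 : b.1 < c.1)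
    (eab : (Lgraph n).Adj a b) (eac : (Lgraph n).Adj a c) (ebc : (Lgraph n).Adj b c) :
    ({a, b, c} : Finset (Fin (2*n))) ∈
      (Finset.univ.image (T1 n)) ∪ (Finset.univ.image (T2 n)) := by
  rw [Lgraph, SimpleGraph.fromRel_adj] at eab eac ebc
  have Eab : E n a.1 b.1 := (adj_iff n a.1 b.1 hn a.2 b.2 h1).1 eab.2
  have Eac : E n a.1 c.1 := (adj_iff n a.1 c.1 hn a.2 c.2 (h1.trans h2)).1 eac.2
  have Ebc : E n b.1 c.1 := (adj_iff n b.1 c.1 hn b.2 c.2 h2).1 ebc.2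
  rcases classify n a.1 b.1 c.1 hn h1 h2 c.2 Eab Eac Ebc with h | h | h | h | h
  · refine Finset.mem_union_left _ (Finset.mem_image.2 ⟨⟨a.1, by omega⟩, Finset.mem_univ _, ?_⟩)
    have m := mod3 n (a.1+1) (by omega) (by omega)
    ext x
    simp only [T1, Finset.mem_insert, Finset.mem_singleton, Fin.ext_iff]
    omega
  · refine Finset.mem_union_left _ (Finset.mem_image.2 ⟨⟨n-1, by omega⟩, Finset.mem_univ _, ?_⟩)
    have m := mod3 n (n-1+1) (by omega) (by omega)
    ext x
    simp only [T1, Finset.mem_insert, Finset.mem_singleton, Fin.ext_iff]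
    omega
  · refine Finset.mem_union_right _ (Finset.mem_image.2 ⟨⟨a.1, by omega⟩, Finset.mem_univ _, ?_⟩)
    have m := mod3 n (a.1+2) (by omega) (by omega)
    ext x
    simp only [T2, Finset.mem_insert, Finset.mem_singleton, Fin.ext_iff]
    omega
  · refine Finset.mem_union_right _ (Finset.mem_image.2 ⟨⟨n-2, by omega⟩, Finset.mem_univ _, ?_⟩)
    have m := mod3 n (n-2+2) (by omega) (by omega)
    ext x
    simp only [T2, Finset.mem_insert, Finset.mem_singleton, Fin.ext_iff]
    omega
  · refine Finset.mem_union_right _ (Finset.mem_image.2 ⟨⟨n-1, by omega⟩, Finset.mem_univ _, ?_⟩)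
    have m := mod3 n (n-1+2) (by omega) (by omega)
    ext x
    simp only [T2, Finset.mem_insert, Finset.mem_singleton, Fin.ext_iff]
    omega

lemma T1_clique (n : ℕ) (hn : 7 ≤ n) (k : Fin n) : T1 n k ∈ (Lgraph n).cliqueFinset 3 := by
  have hk := k.2
  have m := mod3 n (k.1+1) (by omega) (by omega)
  rw [SimpleGraph.mem_cliqueFinset_iff, T1, SimpleGraph.is3Clique_triple_iff]
  refine ⟨?_, ?_, ?_⟩ <;> rw [Lgraph, SimpleGraph.fromRel_adj] <;>
    simp only [ne_eq, Fin.mk.injEq, Fin.val_mk]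
  · refine ⟨by omega, Or.inl ?_⟩
    exact Or.inl ⟨by omega, by omega, rfl⟩
  · refine ⟨by omega, Or.inl ?_⟩
    exact Or.inr (Or.inl ⟨by omega, rfl⟩)
  · refine ⟨by omega, Or.inr ?_⟩
    refine Or.inr (Or.inr (Or.inr (Or.inr ⟨by omega, by omega, ?_⟩)))
    show (k.1+1) % n = (n + k.1 + 1) % n
    rw [Nat.add_assoc, Nat.add_mod_left]

lemma T2_clique (n : ℕ) (hn : 7 ≤ n) (k : Fin n) : T2 n k ∈ (Lgraph n).cliqueFinset 3 := by
  have hk := k.2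
  have m := mod3 n (k.1+2) (by omega) (by omega)
  rw [SimpleGraph.mem_cliqueFinset_iff, T2, SimpleGraph.is3Clique_triple_iff]
  refine ⟨?_, ?_, ?_⟩ <;> rw [Lgraph, SimpleGraph.fromRel_adj] <;>
    simp only [ne_eq, Fin.mk.injEq, Fin.val_mk]
  · refine ⟨by omega, Or.inl ?_⟩
    exact Or.inr (Or.inl ⟨by omega, rfl⟩)
  · refine ⟨by omega, Or.inr ?_⟩
    refine Or.inr (Or.inr (Or.inr (Or.inl ⟨by omega, by omega, ?_⟩)))
    have m2 := mod3 n (n + (k.1+2) % n + n - 2) (by omega) (by omega)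
    omega
  · refine ⟨by omega, Or.inl ?_⟩
    refine Or.inr (Or.inr (Or.inl ⟨by omega, by omega, ?_⟩))
    have m2 := mod3 n (n + k.1 + 2) (by omega) (by omega)
    omega

lemma T1_inj (n : ℕ) (hn : 7 ≤ n) : Function.Injective (T1 n) := by
  intro k k' h
  have hk := k.2
  have hk' := k'.2
  have hmem : (⟨n + k.1, by omega⟩ : Fin (2*n)) ∈ T1 n k' := by
    rw [← h]; simp [T1]
  have m := mod3 n (k'.1+1) (by omega) (by omega)
  simp only [T1, Finset.mem_insert, Finset.mem_singleton, Fin.ext_iff] at hmem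
  exact Fin.ext (by omega)

lemma T2_inj (n : ℕ) (hn : 7 ≤ n) : Function.Injective (T2 n) := by
  intro k k' h
  have hk := k.2
  have hk' := k'.2
  have hmem : (⟨k.1, by omega⟩ : Fin (2*n)) ∈ T2 n k' := by
    rw [← h]; simp [T2]
  have m := mod3 n (k'.1+2) (by omega) (by omega)
  simp only [T2, Finset.mem_insert, Finset.mem_singleton, Fin.ext_iff] at hmem
  exact Fin.ext (by omega)

lemma T_disj (n : ℕ) (hn : 7 ≤ n) :
    Disjoint (Finset.univ.image (T1 n)) (Finset.univ.image (T2 n)) := by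
  rw [Finset.disjoint_left]
  rintro s h1 h2
  obtain ⟨k, -, rfl⟩ := Finset.mem_image.1 h1
  obtain ⟨k', -, hk'⟩ := Finset.mem_image.1 h2
  have hk2 := k.2
  have hk'2 := k'.2
  have m := mod3 n (k.1+1) (by omega) (by omega)
  have m' := mod3 n (k'.1+2) (by omega) (by omega)
  have h1m : (⟨k.1, by omega⟩ : Fin (2*n)) ∈ T2 n k' := by rw [hk']; simp [T1]
  have h2m : (⟨(k.1+1) % n, by omega⟩ : Fin (2*n)) ∈ T2 n k' := by
    rw [hk']; simp [T1]
  simp only [T2, Finset.mem_insert, Finset.mem_singleton, Fin.ext_iff] at h1m h2m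
  omega

/-- For `n ≥ 7`, the graph `Lₙ` contains exactly `2n` triangles. -/
theorem stmt_14 (n : ℕ) (hn : 7 ≤ n) :
    ((Lgraph n).cliqueFinset 3).card = 2 * n := by
  have himg : (Lgraph n).cliqueFinset 3 =
      (Finset.univ.image (T1 n)) ∪ (Finset.univ.image (T2 n)) := by
    ext s
    constructor
    · intro hs
      rw [SimpleGraph.mem_cliqueFinset_iff] at hs
      obtain ⟨hcl, hcard⟩ := hs
      obtain ⟨a, b, c, hab, hac, hbc, rfl⟩ := Finset.card_eq_three.1 hcard
      have Aab : (Lgraph n).Adj a b := hcl (by simp) (by simp) hab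
      have Aac : (Lgraph n).Adj a c := hcl (by simp) (by simp) hac
      have Abc : (Lgraph n).Adj b c := hcl (by simp) (by simp) hbc
      have vab : a.1 ≠ b.1 := fun h => hab (Fin.ext h)
      have vac : a.1 ≠ c.1 := fun h => hac (Fin.ext h)
      have vbc : b.1 ≠ c.1 := fun h => hbc (Fin.ext h)
      rcases lt_or_gt_of_ne vab with o1 | o1 <;> rcases lt_or_gt_of_ne vac with o2 | o2 <;>
        rcases lt_or_gt_of_ne vbc with o3 | o3
      · exact tri_mem n hn a b c o1 o3 Aab Aac Abc
      · have hset : ({a,b,c} : Finset (Fin (2*n))) = {a,c,b} := by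
          ext t; simp only [Finset.mem_insert, Finset.mem_singleton]; tauto
        rw [hset]; exact tri_mem n hn a c b o2 o3 Aac Aab Abc.symm
      · omega
      · have hset : ({a,b,c} : Finset (Fin (2*n))) = {c,a,b} := by
          ext t; simp only [Finset.mem_insert, Finset.mem_singleton]; tauto
        rw [hset]; exact tri_mem n hn c a b o2 o1 Aac.symm Abc.symm Aab
      · have hset : ({a,b,c} : Finset (Fin (2*n))) = {b,a,c} := by
          ext t; simp only [Finset.mem_insert, Finset.mem_singleton]; tauto
        rw [hset]; exact tri_mem n hn b a c o1 o2 Aab.symm Abc Aac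
      · omega
      · have hset : ({a,b,c} : Finset (Fin (2*n))) = {b,c,a} := by
          ext t; simp only [Finset.mem_insert, Finset.mem_singleton]; tauto
        rw [hset]; exact tri_mem n hn b c a o3 o2 Abc Aab.symm Aac.symm
      · have hset : ({a,b,c} : Finset (Fin (2*n))) = {c,b,a} := by
          ext t; simp only [Finset.mem_insert, Finset.mem_singleton]; tauto
        rw [hset]; exact tri_mem n hn c b a o3 o1 Abc.symm Aac.symm Aab.symm
    · intro hs
      rcases Finset.mem_union.1 hs with h | h
      · obtain ⟨k, -, rfl⟩ := Finset.mem_image.1 h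
        exact T1_clique n hn k
      · obtain ⟨k, -, rfl⟩ := Finset.mem_image.1 h
        exact T2_clique n hn k
  rw [himg, Finset.card_union_of_disjoint (T_disj n hn),
    Finset.card_image_of_injective _ (T1_inj n hn),
    Finset.card_image_of_injective _ (T2_inj n hn)]
  simp [Finset.card_univ]
  omega
end

section
/- For each integer n ≥ 7 and each k with 0 ≤ k < n, the edge of L_n joining vertex k and vertex n+k lies in exactly two triangles, namely the triangles with third vertex (k+1) mod n and with third vertex n+((k+2) mod n). -/
lemma tri3 (n e : ℕ) (h : 0 < n) (h3 : e < 3 * n) :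
    e % n < n ∧ (e % n = e ∨ e % n + n = e ∨ e % n + 2*n = e) := by
  refine ⟨Nat.mod_lt _ h, ?_⟩
  have he := Nat.div_add_mod e n
  have hd : e / n < 3 := Nat.div_lt_of_lt_mul (by omega)
  interval_cases h4 : e / n <;> omega

lemma tri2 (n e : ℕ) (h : 0 < n) (h2 : e < 2 * n) :
    e % n < n ∧ (e % n = e ∨ e % n + n = e) := by
  obtain ⟨a, b⟩ := tri3 n e h (by omega)
  exact ⟨a, by omega⟩

set_option maxHeartbeats 4000000 in
/-- For `n ≥ 7` and `0 ≤ k < n`, the edge of `Lₙ` joining `k` and `n+k` lies in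
exactly two triangles, with third vertices `(k+1) % n` and `n + ((k+2) % n)`. -/
theorem stmt_15 (n : ℕ) (hn : 7 ≤ n) (k : ℕ) (hk : k < n) :
    (Lgraph n).Adj ⟨k, by omega⟩ ⟨n + k, by omega⟩ ∧
    ∀ w : Fin (2 * n),
      ((Lgraph n).Adj ⟨k, by omega⟩ w ∧ (Lgraph n).Adj ⟨n + k, by omega⟩ w) ↔
        (w = ⟨(k + 1) % n, by have := Nat.mod_lt (k+1) (show 0 < n by omega); omega⟩ ∨ w = ⟨n + ((k + 2) % n), by have := Nat.mod_lt (k+2) (show 0 < n by omega); omega⟩) := by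
  have hn0 : 0 < n := by omega
  obtain ⟨l1, e1⟩ := tri2 n (k+1) hn0 (by omega)
  obtain ⟨l2, e2⟩ := tri2 n (k+2) hn0 (by omega)
  refine ⟨?_, fun w => ?_⟩
  · simp only [Lgraph, SimpleGraph.fromRel_adj, ne_eq, Fin.mk.injEq, Lrel]
    exact ⟨by omega, Or.inl (Or.inr (Or.inl ⟨hk, trivial⟩))⟩
  · obtain ⟨w, hw⟩ := w
    simp only [Lgraph, SimpleGraph.fromRel_adj, ne_eq, Fin.mk.injEq, Lrel]
    rw [show n+k+2 = n+(k+2) by omega, show n+k+n-2 = n+(k+n-2) by omega,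
        show n+k+1 = n+(k+1) by omega]
    simp only [Nat.add_mod_left]
    constructor
    · rintro ⟨⟨hne1, h1⟩, ⟨hne2, h2⟩⟩
      obtain ⟨l3, e3⟩ := tri2 n (k+n-2) hn0 (by omega)
      obtain ⟨l4, e4⟩ := tri3 n (w+1) hn0 (by omega)
      obtain ⟨l5, e5⟩ := tri3 n (w+2) hn0 (by omega)
      obtain ⟨l6, e6⟩ := tri3 n (w+n-2) hn0 (by omega)
      rcases h1 with (h1|h1|h1|h1|h1)|(h1|h1|h1|h1|h1) <;>
        rcases h2 with (h2|h2|h2|h2|h2)|(h2|h2|h2|h2|h2) <;> omega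
    · rintro (rfl | rfl)
      · refine ⟨⟨by omega, Or.inl (Or.inl ⟨hk, l1, rfl⟩)⟩,
          ⟨by omega, Or.inl (Or.inr (Or.inr (Or.inr (Or.inr ⟨by omega, by omega, rfl⟩))))⟩⟩
      · refine ⟨⟨by omega, Or.inr (Or.inr (Or.inr (Or.inr (Or.inl ⟨by omega, by omega, ?_⟩))))⟩,
          ⟨by omega, Or.inl (Or.inr (Or.inr (Or.inl ⟨by omega, by omega, rfl⟩)))⟩⟩
        rw [show n + (k+2) % n + n - 2 = ((k+2) % n + n - 2) + n by omega, Nat.add_mod_right]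
        rcases e2 with e2 | e2
        · rw [show (k+2) % n + n - 2 = k + n by omega, Nat.add_mod_right, Nat.mod_eq_of_lt hk]
        · rw [show (k+2) % n + n - 2 = k by omega, Nat.mod_eq_of_lt hk]
end

section
/- If G is the line graph of a finite simple 3-regular triangle-free graph on 2n vertices, then G is a 4-regular graph on 3n vertices with exactly 2n triangles, every edge of G lies in a triangle, and G attains the lower bound of (number of vertices)·4/6 triangles. -/
open SimpleGraph in
instance lineGraphAdjDecidable' {V : Type*} [Fintype V] [DecidableEq V]
    (H : SimpleGraph V) : DecidableRel (H.lineGraph).Adj := fun e f =>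
  decidable_of_iff _ (lineGraph_adj_iff_exists (e₁ := e) (e₂ := f)).symm

set_option linter.unusedSectionVars false

namespace LineGraphAux

open SimpleGraph Finset

variable {V : Type*} [Fintype V] [DecidableEq V] (H : SimpleGraph V) [DecidableRel H.Adj]

/-- The finset of edges of `H` through a vertex `v`, as a finset of `H.edgeSet`. -/
def S (v : V) : Finset H.edgeSet := univ.filter (fun e => v ∈ (e : Sym2 V))

lemma mem_S {v : V} {e : H.edgeSet} : e ∈ S H v ↔ v ∈ (e : Sym2 V) := by
  simp [S]

lemma card_S (v : V) : (S H v).card = H.degree v := by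
  rw [← H.card_incidenceFinset_eq_degree]
  refine Finset.card_bij (fun e _ => (e : Sym2 V)) ?_ ?_ ?_
  · intro e he
    rw [mem_incidenceFinset]
    exact ⟨e.2, (mem_S H).mp he⟩
  · intro e _ f _ h
    exact Subtype.ext h
  · intro e he
    rw [mem_incidenceFinset] at he
    exact ⟨⟨e, he.1⟩, (mem_S H).mpr he.2, rfl⟩

lemma edge_eq {e : H.edgeSet} {u x : V} (hne : u ≠ x) (hu : u ∈ (e : Sym2 V))
    (hx : x ∈ (e : Sym2 V)) : (e : Sym2 V) = s(u, x) :=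
  (Sym2.mem_and_mem_iff hne).mp ⟨hu, hx⟩

lemma adj_of_mem {e : H.edgeSet} {u x : V} (hne : u ≠ x) (hu : u ∈ (e : Sym2 V))
    (hx : x ∈ (e : Sym2 V)) : H.Adj u x := by
  have := e.2
  rw [edge_eq H hne hu hx] at this
  exact this

/-- Three pairwise adjacent edges of a triangle-free graph share a common vertex. -/
lemma common_vertex (hfree : H.CliqueFree 3) {e f g : H.edgeSet}
    (hef : (H.lineGraph).Adj e f) (heg : (H.lineGraph).Adj e g)
    (hfg : (H.lineGraph).Adj f g) :
    ∃ v, v ∈ (e : Sym2 V) ∧ v ∈ (f : Sym2 V) ∧ v ∈ (g : Sym2 V) := by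
  obtain ⟨hne_ef, u, hue, huf⟩ := lineGraph_adj_iff_exists.mp hef
  by_cases hug : u ∈ (g : Sym2 V)
  · exact ⟨u, hue, huf, hug⟩
  obtain ⟨hne_eg, x, hxe, hxg⟩ := lineGraph_adj_iff_exists.mp heg
  obtain ⟨hne_fg, y, hyf, hyg⟩ := lineGraph_adj_iff_exists.mp hfg
  have hxu : u ≠ x := fun h => hug (h ▸ hxg)
  have hyu : u ≠ y := fun h => hug (h ▸ hyg)
  have hxy : x ≠ y := by
    intro h
    apply hne_ef
    apply Subtype.ext
    rw [edge_eq H hxu hue hxe, edge_eq H hyu huf hyf, h]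
  exfalso
  exact hfree {u, x, y} (is3Clique_triple_iff.mpr
    ⟨adj_of_mem H hxu hue hxe, adj_of_mem H hyu huf hyf, adj_of_mem H hxy hxg hyg⟩)

lemma S_isNClique (hreg : H.IsRegularOfDegree 3) (v : V) :
    (H.lineGraph).IsNClique 3 (S H v) := by
  constructor
  · intro e he f hf hne
    rw [Finset.mem_coe, mem_S] at he hf
    exact lineGraph_adj_iff_exists.mpr ⟨hne, v, he, hf⟩
  · rw [card_S, hreg]

lemma card_triangles (hreg : H.IsRegularOfDegree 3) (hfree : H.CliqueFree 3) :
    ((H.lineGraph).cliqueFinset 3).card = Fintype.card V := by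
  symm
  rw [← Finset.card_univ]
  refine Finset.card_bij (fun v _ => S H v) ?_ ?_ ?_
  · intro v _
    rw [mem_cliqueFinset_iff]
    exact S_isNClique H hreg v
  · intro v _ w _ h
    by_contra hvw
    have hc : 1 < (S H v).card := by rw [card_S, hreg]; norm_num
    obtain ⟨e, he⟩ := Finset.card_pos.mp (by omega : 0 < (S H v).card)
    have hew : e ∈ S H w := by rwa [← h]
    obtain ⟨f, hf, hfe⟩ := Finset.exists_mem_ne hc e
    have hfw : f ∈ S H w := by rwa [← h]
    apply hfe
    apply Subtype.ext
    rw [edge_eq H hvw ((mem_S H).mp hf) ((mem_S H).mp hfw),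
      edge_eq H hvw ((mem_S H).mp he) ((mem_S H).mp hew)]
  · intro t ht
    rw [mem_cliqueFinset_iff] at ht
    obtain ⟨e, f, g, hef, heg, hfg, rfl⟩ := Finset.card_eq_three.mp ht.2
    have hae : (H.lineGraph).Adj e f := ht.1 (by simp) (by simp) hef
    have hag : (H.lineGraph).Adj e g := ht.1 (by simp) (by simp) heg
    have hfg' : (H.lineGraph).Adj f g := ht.1 (by simp) (by simp) hfg
    obtain ⟨u, hue, huf, hug⟩ := common_vertex H hfree hae hag hfg'
    refine ⟨u, mem_univ u, ?_⟩
    symm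
    apply Finset.eq_of_subset_of_card_le
    · intro x hx
      rw [Finset.mem_insert, Finset.mem_insert, Finset.mem_singleton] at hx
      rcases hx with rfl | rfl | rfl
      · exact (mem_S H).mpr hue
      · exact (mem_S H).mpr huf
      · exact (mem_S H).mpr hug
    · rw [ht.2, card_S, hreg]

lemma lineGraph_regular (hreg : H.IsRegularOfDegree 3) :
    (H.lineGraph).IsRegularOfDegree 4 := by
  rintro ⟨e', he'⟩
  induction e' using Sym2.ind with
  | _ a b =>
    have hadj : H.Adj a b := he'
    have hne : a ≠ b := hadj.ne
    have hN : (H.lineGraph).neighborFinset ⟨s(a, b), he'⟩ =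
        (S H a ∪ S H b).erase ⟨s(a, b), he'⟩ := by
      ext f
      rw [mem_neighborFinset, Finset.mem_erase, Finset.mem_union, mem_S, mem_S,
        lineGraph_adj_iff_exists]
      constructor
      · rintro ⟨hne', v, hv1, hv2⟩
        refine ⟨Ne.symm hne', ?_⟩
        rcases Sym2.mem_iff.mp hv1 with rfl | rfl
        · exact Or.inl hv2
        · exact Or.inr hv2
      · rintro ⟨hfe, h⟩
        refine ⟨Ne.symm hfe, ?_⟩
        rcases h with h | h
        · exact ⟨a, Sym2.mem_mk_left a b, h⟩
        · exact ⟨b, Sym2.mem_mk_right a b, h⟩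
    have hinter : S H a ∩ S H b = {⟨s(a, b), he'⟩} := by
      ext f
      rw [Finset.mem_inter, mem_S, mem_S, Finset.mem_singleton]
      constructor
      · rintro ⟨h1, h2⟩
        exact Subtype.ext (edge_eq H hne h1 h2)
      · rintro rfl
        exact ⟨Sym2.mem_mk_left a b, Sym2.mem_mk_right a b⟩
    have hu := Finset.card_union_add_card_inter (S H a) (S H b)
    rw [hinter, Finset.card_singleton, card_S, card_S, hreg, hreg] at hu
    rw [← card_neighborFinset_eq_degree, hN,
      Finset.card_erase_of_mem (Finset.mem_union_left _
        ((mem_S H).mpr (Sym2.mem_mk_left a b)))]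
    omega

end LineGraphAux

open LineGraphAux SimpleGraph in
/-- The line graph of a 3-regular triangle-free graph on `2n` vertices is a
4-regular graph on `3n` vertices with exactly `2n` triangles, every edge lies
in a triangle, and it attains the lower bound of `|V|·4/6` triangles. -/
theorem stmt_19 {V : Type*} [Fintype V] [DecidableEq V] (H : SimpleGraph V)
    [DecidableRel H.Adj] (n : ℕ) (hcard : Fintype.card V = 2 * n)
    (hreg : H.IsRegularOfDegree 3) (hfree : H.CliqueFree 3) :
    (H.lineGraph).IsRegularOfDegree 4 ∧
    Fintype.card H.edgeSet = 3 * n ∧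
    ((H.lineGraph).cliqueFinset 3).card = 2 * n ∧
    (∀ e f : H.edgeSet, (H.lineGraph).Adj e f →
      ∃ g : H.edgeSet, (H.lineGraph).Adj e g ∧ (H.lineGraph).Adj f g) ∧
    ((((H.lineGraph).cliqueFinset 3).card : ℚ) =
      (Fintype.card H.edgeSet : ℚ) * 4 / 6) := by
  have hE : Fintype.card H.edgeSet = 3 * n := by
    have hsum := H.sum_degrees_eq_twice_card_edges
    have : ∑ v : V, H.degree v = 3 * Fintype.card V := by
      rw [Finset.sum_congr rfl (fun v _ => hreg v), Finset.sum_const, Finset.card_univ,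
        smul_eq_mul, mul_comm]
    rw [this, hcard, H.edgeFinset_card] at hsum
    omega
  have hT : ((H.lineGraph).cliqueFinset 3).card = 2 * n := by
    rw [card_triangles H hreg hfree, hcard]
  refine ⟨lineGraph_regular H hreg, hE, hT, ?_, ?_⟩
  · intro e f hadj
    obtain ⟨hne, u, hue, huf⟩ := lineGraph_adj_iff_exists.mp hadj
    have hcS : (S H u).card = 3 := by rw [card_S, hreg]
    have : ∃ g ∈ S H u, g ≠ e ∧ g ≠ f := by
      by_contra hcon
      push_neg at hcon
      have hsub : S H u ⊆ {e, f} := by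
        intro g hg
        rw [Finset.mem_insert, Finset.mem_singleton]
        by_cases hge : g = e
        · exact Or.inl hge
        · exact Or.inr (hcon g hg hge)
      have := Finset.card_le_card hsub
      have h2 : ({e, f} : Finset H.edgeSet).card ≤ 2 :=
        (Finset.card_insert_le _ _).trans (by simp)
      omega
    obtain ⟨g, hg, hge, hgf⟩ := this
    exact ⟨g, lineGraph_adj_iff_exists.mpr ⟨Ne.symm hge, u, hue, (mem_S H).mp hg⟩,
      lineGraph_adj_iff_exists.mpr ⟨Ne.symm hgf, u, huf, (mem_S H).mp hg⟩⟩
  · rw [hT, hE]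
    push_cast
    ring
end
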